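/- Let 𝔤 = 𝔰𝔩₂(ℂ) with standard basis h, e, f and γ₂ = ½ h⊗h + e⊗f + f⊗e. Stolin's rational solution ρ(z) = (1/z)·γ₂ + z·(f⊗h + h⊗f) − z³·f⊗f satisfies the classical Yang–Baxter equation with one spectral parameter: for all x, y ∈ ℂ with x ≠ 0, y ≠ 0 and x+y ≠ 0, one has [ρ(x), ρ(x+y)]^{12,13} + [ρ(x+y), ρ(y)]^{13,23} + [ρ(x), ρ(y)]^{12,23} = 0. -/

import Mathlib

open scoped TensorProduct
open Matrix

noncomputable section

/-- The Lie algebra of `2 × 2` complex matrices (ambient algebra of `𝔰𝔩₂(ℂ)`). -/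
abbrev M2 : Type := Matrix (Fin 2) (Fin 2) ℂ

/-- `h = e₁₁ - e₂₂`. -/
def hM : M2 := Matrix.single 0 0 1 - Matrix.single 1 1 1

/-- `e = e₁₂`. -/
def eM : M2 := Matrix.single 0 1 1

/-- `f = e₂₁`. -/
def fM : M2 := Matrix.single 1 0 1

/-- The Casimir element `γ₂ = ½ h⊗h + e⊗f + f⊗e` of `𝔰𝔩₂(ℂ)`. -/
def γ₂ : M2 ⊗[ℂ] M2 := (1 / 2 : ℂ) • (hM ⊗ₜ[ℂ] hM) + eM ⊗ₜ[ℂ] fM + fM ⊗ₜ[ℂ] eM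

/-- Stolin's rational solution `ρ(z) = γ₂/z + z·(f⊗h + h⊗f) − z³·f⊗f` for `𝔰𝔩₂(ℂ)`. -/
def ρStolin (z : ℂ) : M2 ⊗[ℂ] M2 :=
  z⁻¹ • γ₂ + z • (fM ⊗ₜ[ℂ] hM + hM ⊗ₜ[ℂ] fM) - z ^ 3 • (fM ⊗ₜ[ℂ] fM)


/-!
All three brackets are bilinear, so after expanding `ρStolin` each side becomes a combination of
simple tensors in `h, e, f` whose brackets come from the `𝔰𝔩₂` table
`⁅h, e⁆ = 2e`, `⁅h, f⁆ = -2f`, `⁅e, f⁆ = h`. The resulting coefficients are rational functions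
of `x` and `y` which cancel identically once the denominators `x`, `y`, `x + y` are cleared.
-/

lemma Ring.lie_self {A : Type*} [Ring A] (a : A) : ⁅a, a⁆ = 0 := by
  rw [Ring.lie_def, sub_self]

lemma Ring.lie_skew {A : Type*} [Ring A] (a b : A) : -⁅b, a⁆ = ⁅a, b⁆ := by
  rw [Ring.lie_def, Ring.lie_def, neg_sub]

lemma lie_hM_eM : ⁅hM, eM⁆ = (2 : ℂ) • eM := by
  ext i j
  fin_cases i <;> fin_cases j <;>
    simp [hM, eM, Ring.lie_def, Matrix.mul_apply, Matrix.single]; norm_num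

lemma lie_hM_fM : ⁅hM, fM⁆ = (-2 : ℂ) • fM := by
  ext i j
  fin_cases i <;> fin_cases j <;>
    simp [hM, fM, Ring.lie_def, Matrix.mul_apply, Matrix.single]; norm_num

lemma lie_eM_fM : ⁅eM, fM⁆ = hM := by
  ext i j
  fin_cases i <;> fin_cases j <;>
    simp [hM, eM, fM, Ring.lie_def, Matrix.mul_apply, Matrix.single]

lemma lie_eM_hM : ⁅eM, hM⁆ = (-2 : ℂ) • eM := by
  rw [← Ring.lie_skew, lie_hM_eM, neg_smul]

lemma lie_fM_hM : ⁅fM, hM⁆ = (2 : ℂ) • fM := by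
  rw [← Ring.lie_skew, lie_hM_fM, neg_smul, neg_neg]

lemma lie_fM_eM : ⁅fM, eM⁆ = (-1 : ℂ) • hM := by
  rw [← Ring.lie_skew, lie_eM_fM, neg_one_smul]

/-- Stolin's rational solution satisfies the classical Yang–Baxter
equation with one spectral parameter. -/
theorem statement18
    (B1213 B1223 B1323 :
      (M2 ⊗[ℂ] M2) →ₗ[ℂ] (M2 ⊗[ℂ] M2) →ₗ[ℂ] (M2 ⊗[ℂ] (M2 ⊗[ℂ] M2)))
    (hB1213 : ∀ a b c d : M2,
      B1213 (a ⊗ₜ[ℂ] b) (c ⊗ₜ[ℂ] d) = ⁅a, c⁆ ⊗ₜ[ℂ] (b ⊗ₜ[ℂ] d))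
    (hB1223 : ∀ a b c d : M2,
      B1223 (a ⊗ₜ[ℂ] b) (c ⊗ₜ[ℂ] d) = a ⊗ₜ[ℂ] (⁅b, c⁆ ⊗ₜ[ℂ] d))
    (hB1323 : ∀ a b c d : M2,
      B1323 (a ⊗ₜ[ℂ] b) (c ⊗ₜ[ℂ] d) = a ⊗ₜ[ℂ] (c ⊗ₜ[ℂ] ⁅b, d⁆))
    :
    ∀ x y : ℂ, x ≠ 0 → y ≠ 0 → x + y ≠ 0 →
      B1213 (ρStolin x) (ρStolin (x + y)) + B1323 (ρStolin (x + y)) (ρStolin y)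
        + B1223 (ρStolin x) (ρStolin y) = 0 := by
  intro x y hx hy hxy
  simp only [ρStolin, γ₂, map_add, map_sub, _root_.map_smul, LinearMap.add_apply,
    LinearMap.sub_apply, LinearMap.smul_apply, hB1213, hB1223, hB1323, Ring.lie_self,
    lie_hM_eM, lie_eM_hM, lie_hM_fM, lie_fM_hM, lie_eM_fM, lie_fM_eM,
    TensorProduct.zero_tmul, TensorProduct.tmul_zero, smul_zero,
    ← TensorProduct.smul_tmul', TensorProduct.tmul_smul, smul_smul]
  match_scalars <;> field_simp <;> ring

end
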